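/- Let 0 < ℓ < ℓ* and let Υ : ℝ → [0,1] be a smooth nonincreasing function with Υ(t) = 1 for t ≤ ℓ and Υ(t) = 0 for t ≥ ℓ*. For λ ≥ 0 and nonnegative f ∈ L¹([0,1], r dr), define the truncated functional J⁰_λ(u) = (1/2)∫₀¹ [(u'')² + (u')²/r²] r dr + (1/6) Υ( ( ∫₀¹ (u'' + u'/r)² r dr )^{1/2} ) ∫₀¹ (u')³ dr − λ∫₀¹ f u r dr. Then there exist constants C₁, C₂ > 0 (independent of λ, f, u, ℓ, ℓ*) such that every smooth u : [0,1] → ℝ with u'(0) = 0, u(1) = 0, u'(1) = 0 satisfies J⁰_λ(u) ≥ (1/2)X² − C₁X³Υ(X) − C₂ λ ‖f‖_{L¹(r dr)} X, where X = ( ∫₀¹ (u'')² r dr )^{1/2}. In particular J⁰_λ is bounded from below on this class of functions. -/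

import Mathlib

open MeasureTheory Set

/-- The truncated energy functional `J⁰_λ`, in which the cubic term is multiplied by a
cutoff `Υ` evaluated at the `L²(r dr)` norm of the radial Laplacian `Δu = u'' + u'/r`. -/
noncomputable def J0fun (Υ : ℝ → ℝ) (lam : ℝ) (f u : ℝ → ℝ) : ℝ :=
  (1 / 2) * (∫ r in (0:ℝ)..1, ((deriv (deriv u) r) ^ 2 + (deriv u r) ^ 2 / r ^ 2) * r)
    + (1 / 6)
      * Υ (Real.sqrt (∫ r in (0:ℝ)..1, (deriv (deriv u) r + deriv u r / r) ^ 2 * r))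
      * (∫ r in (0:ℝ)..1, (deriv u r) ^ 3)
    - lam * ∫ r in (0:ℝ)..1, f r * u r * r

/-!
Write `v = u'` and `X² = ∫₀¹ v'² r dr`. Since `v 1 = 0`, Cauchy–Schwarz against the weight `r`
gives `|v r| ≤ ∫_r^1 |v'| ≤ X √(log r⁻¹) ≤ 2 X r^(-1/6)`, and integrating this pointwise bound
yields `|∫ v³| ≤ 16 X³` and `|u| ≤ 3 X`. The quadratic part of `J⁰_λ` is at least `X²`, and since
`v 0 = 0` the radial Laplacian satisfies `∫ (v' + v/r)² r = X² + v(1)² + ∫ v²/r ≥ X²`, so by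
monotonicity the cutoff is at most `Υ X`. Boundedness from below follows because `Υ` vanishes
beyond `ℓ*`, whence `X³ Υ X ≤ ℓ*³`, and `X²/2 - c X ≥ -c²/2`.
-/

open intervalIntegral Real

lemma Real.sqrt_log_inv_le_two_mul_rpow {r : ℝ} (hr : 0 < r) :
    √(log r⁻¹) ≤ 2 * r ^ (-(1 / 6) : ℝ) := by
  have ht : 0 < r ^ (-(1 / 3) : ℝ) := rpow_pos_of_pos hr _
  have hlog : log (r ^ (-(1 / 3) : ℝ)) ≤ r ^ (-(1 / 3) : ℝ) - 1 := log_le_sub_one_of_pos ht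
  have hsq : (2 * r ^ (-(1 / 6) : ℝ)) ^ 2 = 4 * r ^ (-(1 / 3) : ℝ) := by
    rw [mul_pow, ← rpow_natCast (r ^ _) 2, ← rpow_mul hr.le]
    norm_num
  rw [sqrt_le_left (by positivity), hsq, log_inv]
  rw [log_rpow hr] at hlog
  linarith

lemma integral_abs_le_sqrt_mul_sqrt_log {w : ℝ → ℝ} (hw : Continuous w) {a b : ℝ}
    (ha : 0 < a) (hab : a ≤ b) :
    ∫ s in a..b, |w s| ≤ √(∫ s in a..b, w s ^ 2 * s) * √(log (b / a)) := by
  set μ := volume.restrict (Ioc a b)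
  have hpos : ∀ᵐ s ∂μ, 0 < s :=
    (ae_restrict_iff' measurableSet_Ioc).mpr (.of_forall fun s hs => ha.trans hs.1)
  -- `|w s| = (√s |w s|) (√s)⁻¹`, and Hölder with `p = q = 2`.
  set F : ℝ → ℝ := fun s => √s * |w s|
  set G : ℝ → ℝ := fun s => (√s)⁻¹
  have hF : MemLp F 2 μ := by
    refine (memLp_two_iff_integrable_sq (by fun_prop : Continuous F).aestronglyMeasurable).mpr ?_
    exact ((by fun_prop : Continuous fun s => F s ^ 2).intervalIntegrable a b).1
  have hG : MemLp G 2 μ := by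
    refine (memLp_two_iff_integrable_sq (by fun_prop : Measurable G).aestronglyMeasurable).mpr ?_
    refine (ContinuousOn.integrableOn_Icc ?_).mono_set Ioc_subset_Icc_self
    exact ((continuous_sqrt.continuousOn.inv₀ fun s hs =>
      (sqrt_pos.mpr (ha.trans_le hs.1)).ne').pow 2)
  have holder := integral_mul_le_Lp_mul_Lq_of_nonneg (f := F) (g := G) HolderConjugate.two_two
    (.of_forall fun s => by positivity) (.of_forall fun s => by positivity)
    (by rwa [ENNReal.ofReal_ofNat]) (by rwa [ENNReal.ofReal_ofNat])
  have hFG : ∫ s, F s * G s ∂μ = ∫ s in a..b, |w s| := by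
    rw [integral_of_le hab]
    refine integral_congr_ae (hpos.mono fun s hs => ?_)
    simp only [F, G]
    field_simp [(sqrt_pos.mpr hs).ne']
  have hF2 : ∫ s, F s ^ (2 : ℝ) ∂μ = ∫ s in a..b, w s ^ 2 * s := by
    rw [integral_of_le hab]
    refine integral_congr_ae (hpos.mono fun s hs => ?_)
    simp only [F, rpow_two, mul_pow, sq_abs, sq_sqrt hs.le]
    ring
  have hG2 : ∫ s, G s ^ (2 : ℝ) ∂μ = log (b / a) := by
    rw [← integral_inv_of_pos ha (ha.trans_le hab), integral_of_le hab]
    refine integral_congr_ae (hpos.mono fun s hs => ?_)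
    simp only [G, rpow_two, inv_pow, sq_sqrt hs.le]
  rw [← hFG, ← hF2, ← hG2, sqrt_eq_rpow, sqrt_eq_rpow]
  exact holder

lemma abs_le_mul_rpow_of_apply_one_eq_zero {v : ℝ → ℝ} (hv : ContDiff ℝ 1 v) (hv1 : v 1 = 0)
    {r : ℝ} (hr : r ∈ Ioc (0 : ℝ) 1) :
    |v r| ≤ 2 * √(∫ s in (0:ℝ)..1, deriv v s ^ 2 * s) * r ^ (-(1 / 6) : ℝ) := by
  have hv' : Continuous (deriv v) := hv.continuous_deriv_one
  have hftc : ∫ s in r..1, deriv v s = v 1 - v r :=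
    integral_deriv_eq_sub (fun x _ => hv.differentiable one_ne_zero x) (hv'.intervalIntegrable _ _)
  have hweight : ∫ s in r..1, deriv v s ^ 2 * s ≤ ∫ s in (0:ℝ)..1, deriv v s ^ 2 * s :=
    integral_mono_interval hr.1.le hr.2 le_rfl
      ((ae_restrict_iff' measurableSet_Ioc).mpr
        (.of_forall fun s hs => mul_nonneg (sq_nonneg _) hs.1.le))
      ((by fun_prop : Continuous fun s => deriv v s ^ 2 * s).intervalIntegrable _ _)
  calc |v r| = |∫ s in r..1, deriv v s| := by rw [hftc, hv1, zero_sub, abs_neg]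
    _ ≤ ∫ s in r..1, |deriv v s| := abs_integral_le_integral_abs hr.2
    _ ≤ √(∫ s in r..1, deriv v s ^ 2 * s) * √(log (1 / r)) :=
        integral_abs_le_sqrt_mul_sqrt_log hv' hr.1 hr.2
    _ ≤ √(∫ s in (0:ℝ)..1, deriv v s ^ 2 * s) * (2 * r ^ (-(1 / 6) : ℝ)) := by
        rw [one_div]
        exact mul_le_mul (sqrt_le_sqrt hweight) (sqrt_log_inv_le_two_mul_rpow hr.1)
          (sqrt_nonneg _) (sqrt_nonneg _)
    _ = _ := by ring

lemma abs_integral_pow_three_le {v : ℝ → ℝ} (hv : ContDiff ℝ 1 v) (hv1 : v 1 = 0) :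
    |∫ r in (0:ℝ)..1, v r ^ 3| ≤ 16 * √(∫ s in (0:ℝ)..1, deriv v s ^ 2 * s) ^ 3 := by
  set X := √(∫ s in (0:ℝ)..1, deriv v s ^ 2 * s)
  have hX : 0 ≤ X := sqrt_nonneg _
  have hpoint : ∀ r ∈ Ioo (0 : ℝ) 1, |v r ^ 3| ≤ 8 * X ^ 3 * r ^ (-(1 / 2) : ℝ) := by
    intro r hr
    have hb := abs_le_mul_rpow_of_apply_one_eq_zero hv hv1 (Ioo_subset_Ioc_self hr)
    have hcube : (r ^ (-(1 / 6) : ℝ)) ^ 3 = r ^ (-(1 / 2) : ℝ) := by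
      rw [← rpow_natCast, ← rpow_mul hr.1.le]
      norm_num
    calc |v r ^ 3| = |v r| ^ 3 := abs_pow _ _
      _ ≤ (2 * X * r ^ (-(1 / 6) : ℝ)) ^ 3 := by gcongr
      _ = 8 * X ^ 3 * r ^ (-(1 / 2) : ℝ) := by rw [mul_pow, hcube]; ring
  calc |∫ r in (0:ℝ)..1, v r ^ 3| ≤ ∫ r in (0:ℝ)..1, |v r ^ 3| :=
        abs_integral_le_integral_abs zero_le_one
    _ ≤ ∫ r in (0:ℝ)..1, 8 * X ^ 3 * r ^ (-(1 / 2) : ℝ) :=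
        integral_mono_on_of_le_Ioo zero_le_one
          ((hv.continuous.pow 3).abs.intervalIntegrable _ _)
          ((intervalIntegrable_rpow' (by norm_num)).const_mul _) hpoint
    _ = 16 * X ^ 3 := by
        rw [intervalIntegral.integral_const_mul, integral_rpow (Or.inl (by norm_num))]
        norm_num
        ring

lemma abs_le_three_mul_sqrt_of_apply_one_eq_zero {u : ℝ → ℝ} (hu : ContDiff ℝ 2 u)
    (hu1 : u 1 = 0) (hu'1 : deriv u 1 = 0) {r : ℝ} (hr : r ∈ Icc (0 : ℝ) 1) :
    |u r| ≤ 3 * √(∫ s in (0:ℝ)..1, deriv (deriv u) s ^ 2 * s) := by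
  have hv : ContDiff ℝ 1 (deriv u) := hu.deriv'
  set X := √(∫ s in (0:ℝ)..1, deriv (deriv u) s ^ 2 * s)
  have hX : 0 ≤ X := sqrt_nonneg _
  have hftc : ∫ s in r..1, deriv u s = u 1 - u r :=
    integral_deriv_eq_sub (fun x _ => hu.differentiable two_ne_zero x)
      (hv.continuous.intervalIntegrable _ _)
  calc |u r| = |∫ s in r..1, deriv u s| := by rw [hftc, hu1, zero_sub, abs_neg]
    _ ≤ ∫ s in r..1, |deriv u s| := abs_integral_le_integral_abs hr.2
    _ ≤ ∫ s in (0:ℝ)..1, |deriv u s| :=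
        integral_mono_interval hr.1 hr.2 le_rfl (.of_forall fun s => abs_nonneg _)
          (hv.continuous.abs.intervalIntegrable _ _)
    _ ≤ ∫ s in (0:ℝ)..1, 2 * X * s ^ (-(1 / 6) : ℝ) :=
        integral_mono_on_of_le_Ioo zero_le_one (hv.continuous.abs.intervalIntegrable _ _)
          ((intervalIntegrable_rpow' (by norm_num)).const_mul _) fun s hs =>
            abs_le_mul_rpow_of_apply_one_eq_zero hv hu'1 (Ioo_subset_Ioc_self hs)
    _ = 12 / 5 * X := by
        rw [intervalIntegral.integral_const_mul, integral_rpow (Or.inl (by norm_num))]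
        norm_num
        ring
    _ ≤ 3 * X := by linarith

lemma intervalIntegrable_sq_div_of_apply_zero_eq_zero {v : ℝ → ℝ} (hv : ContDiff ℝ 1 v)
    (hv0 : v 0 = 0) : IntervalIntegrable (fun r => v r ^ 2 / r) volume 0 1 := by
  obtain ⟨M, hM⟩ := isCompact_Icc.exists_bound_of_continuousOn
    (hv.continuous_deriv_one.continuousOn (s := Icc (0 : ℝ) 1))
  -- `v` vanishes at `0` and is `M`-Lipschitz on `[0, 1]`, so `v r ^ 2 / r ≤ M ^ 2 r`.
  have hlip : ∀ r ∈ Icc (0 : ℝ) 1, |v r| ≤ M * r := fun r hr => by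
    simpa [hv0, abs_of_nonneg hr.1] using
      (convex_Icc (0 : ℝ) 1).norm_image_sub_le_of_norm_deriv_le
        (fun x _ => hv.differentiable one_ne_zero x) hM ⟨le_rfl, zero_le_one⟩ hr
  refine (intervalIntegrable_iff_integrableOn_Ioc_of_le zero_le_one).mpr <|
    Measure.integrableOn_of_bounded (M := M ^ 2) (by simp)
      ((hv.continuous.measurable.pow_const 2).div measurable_id).aestronglyMeasurable
      ((ae_restrict_iff' measurableSet_Ioc).mpr (.of_forall fun r hr => ?_))
  have hsq : v r ^ 2 ≤ (M * r) ^ 2 := by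
    rw [← sq_abs]
    exact pow_le_pow_left₀ (abs_nonneg _) (hlip r (Ioc_subset_Icc_self hr)) 2
  rw [norm_of_nonneg (div_nonneg (sq_nonneg _) hr.1.le), div_le_iff₀ hr.1]
  nlinarith [hr.1, hr.2, sq_nonneg M]

lemma integral_sq_add_sq_div_sq_mul {v : ℝ → ℝ} (hv : ContDiff ℝ 1 v) (hv0 : v 0 = 0) :
    ∫ r in (0:ℝ)..1, (deriv v r ^ 2 + v r ^ 2 / r ^ 2) * r =
      (∫ r in (0:ℝ)..1, deriv v r ^ 2 * r) + ∫ r in (0:ℝ)..1, v r ^ 2 / r := by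
  have hsq : IntervalIntegrable (fun r => deriv v r ^ 2 * r) volume 0 1 :=
    ((hv.continuous_deriv_one.pow 2).mul continuous_id).intervalIntegrable _ _
  rw [← intervalIntegral.integral_add hsq (intervalIntegrable_sq_div_of_apply_zero_eq_zero hv hv0)]
  refine integral_congr_ae (.of_forall fun r hr => ?_)
  have : r ≠ 0 := (uIoc_of_le (zero_le_one (α := ℝ)) ▸ hr).1.ne'
  field_simp

lemma integral_radialLaplacian_sq_mul {v : ℝ → ℝ} (hv : ContDiff ℝ 1 v) (hv0 : v 0 = 0) :
    ∫ r in (0:ℝ)..1, (deriv v r + v r / r) ^ 2 * r =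
      (∫ r in (0:ℝ)..1, deriv v r ^ 2 * r) + v 1 ^ 2 + ∫ r in (0:ℝ)..1, v r ^ 2 / r := by
  have hv' := hv.continuous_deriv_one
  have hsq : IntervalIntegrable (fun r => deriv v r ^ 2 * r) volume 0 1 :=
    ((hv'.pow 2).mul continuous_id).intervalIntegrable _ _
  have hcross_int : IntervalIntegrable (fun r => 2 * v r * deriv v r) volume 0 1 :=
    ((continuous_const.mul hv.continuous).mul hv').intervalIntegrable _ _
  have hcross : ∫ r in (0:ℝ)..1, 2 * v r * deriv v r = v 1 ^ 2 := by
    rw [integral_eq_sub_of_hasDerivAt (f := fun r => v r ^ 2) (fun x _ => ?_) hcross_int, hv0]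
    · ring
    · simpa using (hv.differentiable one_ne_zero x).hasDerivAt.fun_pow 2
  rw [← hcross, ← intervalIntegral.integral_add hsq hcross_int,
    ← intervalIntegral.integral_add (hsq.add hcross_int)
      (intervalIntegrable_sq_div_of_apply_zero_eq_zero hv hv0)]
  refine integral_congr_ae (.of_forall fun r hr => ?_)
  have : r ≠ 0 := (uIoc_of_le (zero_le_one (α := ℝ)) ▸ hr).1.ne'
  field_simp
  ring

lemma integral_mul_le_mul_integral {g u : ℝ → ℝ} {a b K : ℝ} (hab : a ≤ b)
    (hg : IntervalIntegrable g volume a b) (hg0 : ∀ r ∈ Ioo a b, 0 ≤ g r) (hu : Continuous u)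
    (huK : ∀ r ∈ Ioo a b, u r ≤ K) : ∫ r in a..b, g r * u r ≤ K * ∫ r in a..b, g r := by
  rw [← intervalIntegral.integral_const_mul]
  refine integral_mono_on_of_le_Ioo hab (hg.mul_continuousOn hu.continuousOn) (hg.const_mul K)
    fun r hr => ?_
  rw [mul_comm K]
  exact mul_le_mul_of_nonneg_left (huK r hr) (hg0 r hr)

lemma le_J0fun {Υ : ℝ → ℝ} (hΥa : Antitone Υ) (hΥ0 : ∀ t, 0 ≤ Υ t) {lam : ℝ}
    (hlam : 0 ≤ lam) {f : ℝ → ℝ} (hf0 : ∀ r ∈ Icc (0:ℝ) 1, 0 ≤ f r)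
    (hfint : IntegrableOn (fun r => f r * r) (Ioc 0 1) volume)
    {u : ℝ → ℝ} (hu : ContDiff ℝ 2 u) (hu'0 : deriv u 0 = 0) (hu1 : u 1 = 0)
    (hu'1 : deriv u 1 = 0) {X : ℝ}
    (hX : X = √(∫ r in (0:ℝ)..1, deriv (deriv u) r ^ 2 * r)) :
    (1 / 2) * X ^ 2 - 3 * X ^ 3 * Υ X - 3 * lam * (∫ r in (0:ℝ)..1, f r * r) * X
      ≤ J0fun Υ lam f u := by
  have hv : ContDiff ℝ 1 (deriv u) := hu.deriv'
  set E := ∫ r in (0:ℝ)..1, deriv (deriv u) r ^ 2 * r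
  have hX0 : 0 ≤ X := hX ▸ sqrt_nonneg _
  have hXE : X ^ 2 = E := by
    rw [hX, sq_sqrt (integral_nonneg zero_le_one fun r hr => mul_nonneg (sq_nonneg _) hr.1)]
  have hdiv : 0 ≤ ∫ r in (0:ℝ)..1, deriv u r ^ 2 / r :=
    integral_nonneg zero_le_one fun r hr => div_nonneg (sq_nonneg _) hr.1
  have hquad : E ≤ ∫ r in (0:ℝ)..1, (deriv (deriv u) r ^ 2 + deriv u r ^ 2 / r ^ 2) * r := by
    rw [integral_sq_add_sq_div_sq_mul hv hu'0]
    linarith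
  have hcut : Υ (√(∫ r in (0:ℝ)..1, (deriv (deriv u) r + deriv u r / r) ^ 2 * r)) ≤ Υ X := by
    refine hΥa (hX ▸ sqrt_le_sqrt ?_)
    rw [integral_radialLaplacian_sq_mul hv hu'0]
    linarith [sq_nonneg (deriv u 1)]
  have hcubic : -(16 * X ^ 3 * Υ X) ≤
      Υ (√(∫ r in (0:ℝ)..1, (deriv (deriv u) r + deriv u r / r) ^ 2 * r))
        * ∫ r in (0:ℝ)..1, deriv u r ^ 3 := by
    have hI := hX ▸ abs_integral_pow_three_le hv hu'1
    refine neg_le_of_abs_le ?_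
    rw [abs_mul, abs_of_nonneg (hΥ0 _)]
    calc _ ≤ Υ X * (16 * X ^ 3) := mul_le_mul hcut hI (abs_nonneg _) (hΥ0 _)
      _ = 16 * X ^ 3 * Υ X := by ring
  have hlin : ∫ r in (0:ℝ)..1, f r * u r * r ≤ 3 * X * ∫ r in (0:ℝ)..1, f r * r := by
    simp_rw [mul_right_comm (f _) (u _)]
    refine integral_mul_le_mul_integral zero_le_one
      ((intervalIntegrable_iff_integrableOn_Ioc_of_le zero_le_one).mpr hfint)
      (fun r hr => mul_nonneg (hf0 r (Ioo_subset_Icc_self hr)) hr.1.le) hu.continuous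
      fun r hr => ?_
    exact hX ▸ (le_abs_self _).trans
      (abs_le_three_mul_sqrt_of_apply_one_eq_zero hu hu1 hu'1 (Ioo_subset_Icc_self hr))
  have hΥX : 0 ≤ X ^ 3 * Υ X := mul_nonneg (pow_nonneg hX0 3) (hΥ0 X)
  rw [J0fun]
  nlinarith [mul_le_mul_of_nonneg_left hlin hlam]

/-- Radial lower bound for the truncated functional `J⁰_λ`; in particular it is bounded
from below on the class of smooth functions satisfying the Dirichlet boundary
conditions. -/
theorem stmt10 :
    ∃ C₁ > (0:ℝ), ∃ C₂ > (0:ℝ),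
      ∀ ℓ ℓs : ℝ, 0 < ℓ → ℓ < ℓs →
      ∀ Υ : ℝ → ℝ, ContDiff ℝ (⊤ : ℕ∞) Υ → Antitone Υ →
        (∀ t : ℝ, Υ t ∈ Icc (0:ℝ) 1) →
        (∀ t : ℝ, t ≤ ℓ → Υ t = 1) → (∀ t : ℝ, ℓs ≤ t → Υ t = 0) →
      ∀ lam : ℝ, 0 ≤ lam → ∀ f : ℝ → ℝ,
        (∀ r ∈ Icc (0:ℝ) 1, 0 ≤ f r) →
        IntegrableOn (fun r => f r * r) (Ioc 0 1) volume →
        (∀ u : ℝ → ℝ, ContDiff ℝ (⊤ : ℕ∞) u →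
          deriv u 0 = 0 → u 1 = 0 → deriv u 1 = 0 →
          ∀ X : ℝ, X = Real.sqrt (∫ r in (0:ℝ)..1, (deriv (deriv u) r) ^ 2 * r) →
            (1 / 2) * X ^ 2 - C₁ * X ^ 3 * Υ X
                - C₂ * lam * (∫ r in (0:ℝ)..1, f r * r) * X
              ≤ J0fun Υ lam f u)
        ∧ ∃ m : ℝ, ∀ u : ℝ → ℝ, ContDiff ℝ (⊤ : ℕ∞) u →
            deriv u 0 = 0 → u 1 = 0 → deriv u 1 = 0 →
            m ≤ J0fun Υ lam f u := by
  refine ⟨3, by norm_num, 3, by norm_num,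
    fun ℓ ℓs hℓ hℓℓs Υ _ hΥa hΥm _ hΥ0 lam hlam f hf0 hfint =>
    ⟨fun u hu hu'0 hu1 hu'1 X hX => le_J0fun hΥa (fun t => (hΥm t).1) hlam hf0 hfint
      (hu.of_le (by norm_cast)) hu'0 hu1 hu'1 hX, ?_⟩⟩
  set N := ∫ r in (0:ℝ)..1, f r * r
  refine ⟨-3 * ℓs ^ 3 - (3 * lam * N) ^ 2 / 2, fun u hu hu'0 hu1 hu'1 => ?_⟩
  set X := √(∫ r in (0:ℝ)..1, deriv (deriv u) r ^ 2 * r)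
  have hX : 0 ≤ X := sqrt_nonneg _
  have hdecay : X ^ 3 * Υ X ≤ ℓs ^ 3 := by
    rcases le_or_gt ℓs X with h | h
    · rw [hΥ0 X h, mul_zero]
      exact pow_nonneg (hℓ.trans hℓℓs).le 3
    · calc X ^ 3 * Υ X ≤ X ^ 3 := mul_le_of_le_one_right (pow_nonneg hX 3) (hΥm X).2
        _ ≤ ℓs ^ 3 := pow_le_pow_left₀ hX h.le 3
  nlinarith [le_J0fun hΥa (fun t => (hΥm t).1) hlam hf0 hfint
    (hu.of_le (by norm_cast)) hu'0 hu1 hu'1 rfl, sq_nonneg (X - 3 * lam * N)]
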